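/- arXiv:1501.04985 — 5 statements merged into one kernel-verified Lean document; each statement's English description precedes it below -/
import Mathlib

section
/- For every x in [0, π], there exists a unique z in [0, 2] such that z = 2·sin(x − z/2). -/
/-!
Substituting `u = x - z/2` turns `z = 2 sin (x - z/2)` into `u + sin u = x`, with `z = 2 sin u`.
Since `|sin a - sin b| < |a - b|` for `a ≠ b`, the map `u ↦ u + sin u` is strictly increasing;
it fixes `0` and `π`, so for `x ∈ [0, π]` the equation has exactly one root `u`, which lies in
`[0, π]`. Hence `z = 2 sin u ∈ [0, 2]`.
-/

open Real

namespace Real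

theorem abs_sin_sub_sin_lt {a b : ℝ} (hab : a ≠ b) : |sin a - sin b| < |a - b| := by
  have hhalf : (a - b) / 2 ≠ 0 := div_ne_zero (sub_ne_zero.mpr hab) two_ne_zero
  calc |sin a - sin b| = 2 * |sin ((a - b) / 2)| * |cos ((a + b) / 2)| := by
        rw [sin_sub_sin, abs_mul, abs_mul, abs_two]
    _ ≤ 2 * |sin ((a - b) / 2)| := by
        have := abs_cos_le_one ((a + b) / 2)
        have := abs_nonneg (sin ((a - b) / 2))
        nlinarith
    _ < 2 * |(a - b) / 2| := by gcongr; exact abs_sin_lt_abs hhalf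
    _ = |a - b| := by rw [abs_div, abs_two]; ring

theorem strictMono_add_sin : StrictMono fun u : ℝ => u + sin u := by
  intro a b hab
  have := (abs_lt.mp (abs_sin_sub_sin_lt hab.ne)).2
  rw [abs_of_neg (sub_neg.mpr hab)] at this
  dsimp only
  linarith

theorem exists_mem_Icc_add_sin_eq {x : ℝ} (hx : x ∈ Set.Icc 0 π) :
    ∃ u ∈ Set.Icc 0 π, u + sin u = x := by
  have hends : x ∈ Set.Icc (0 + sin 0) (π + sin π) := by simpa using hx
  exact intermediate_value_Icc pi_pos.le (by fun_prop) hends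

end Real

theorem exists_unique_chord_f (x : ℝ) (hx : x ∈ Set.Icc 0 π) :
    ∃! z : ℝ, z ∈ Set.Icc (0:ℝ) 2 ∧ z = 2 * Real.sin (x - z / 2) := by
  obtain ⟨u, ⟨hu0, huπ⟩, hux⟩ := exists_mem_Icc_add_sin_eq hx
  have hzu : x - 2 * sin u / 2 = u := by linarith
  refine ⟨2 * sin u, ⟨⟨?_, ?_⟩, by rw [hzu]⟩, ?_⟩
  · linarith [sin_nonneg_of_nonneg_of_le_pi hu0 huπ]
  · linarith [sin_le_one u]
  rintro w ⟨-, hw⟩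
  have hv : x - w / 2 = u := strictMono_add_sin.injective (by linarith)
  rw [hw, hv]
end

section
/- For every x ≥ 0, there exists a unique z ≥ 0 such that z = 2·sin(x + z/2), provided x ∈ [0, π]; moreover this z lies in [0, 2]. -/
open Real

/-!
The map `z ↦ 2 sin (x + z / 2)` strictly shrinks distances, because `sin` does, so it has at most
one fixed point. When `sin x ≥ 0` the function `z - 2 sin (x + z / 2)` is `≤ 0` at `0` and `≥ 0`
at `2`, so the intermediate value theorem gives a fixed point in `[0, 2]`; and every fixed point
is at most `2` since `sin ≤ 1`.
-/

theorem Real.abs_sin_sub_sin_lt_s1 {a b : ℝ} (hab : a ≠ b) : |sin a - sin b| < |a - b| := by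
  have hsin : |sin ((a - b) / 2)| < |(a - b) / 2| := abs_sin_lt_abs (by grind)
  rw [sin_sub_sin, abs_mul, abs_mul, abs_two]
  calc 2 * |sin ((a - b) / 2)| * |cos ((a + b) / 2)|
      ≤ 2 * |sin ((a - b) / 2)| := mul_le_of_le_one_right (by positivity) (abs_cos_le_one _)
    _ < 2 * |(a - b) / 2| := by gcongr
    _ = |a - b| := by rw [abs_div, abs_two]; ring

theorem eq_of_eq_two_mul_sin_add_half {x z w : ℝ} (hz : z = 2 * sin (x + z / 2))
    (hw : w = 2 * sin (x + w / 2)) : z = w := by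
  by_contra hne
  have hlt := Real.abs_sin_sub_sin_lt_s1 (a := x + z / 2) (b := x + w / 2) (by grind)
  have hdist : |z - w| = 2 * |sin (x + z / 2) - sin (x + w / 2)| := by
    rw [← abs_two, ← abs_mul, abs_two]
    congr 1
    linarith
  have hhalf : |x + z / 2 - (x + w / 2)| = |z - w| / 2 := by
    rw [show x + z / 2 - (x + w / 2) = (z - w) / 2 by ring, abs_div, abs_two]
  linarith

theorem exists_mem_Icc_eq_two_mul_sin_add_half {x : ℝ} (hx : 0 ≤ sin x) :
    ∃ z ∈ Set.Icc (0 : ℝ) 2, z = 2 * sin (x + z / 2) := by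
  have hcont : ContinuousOn (fun z : ℝ => z - 2 * sin (x + z / 2)) (Set.Icc 0 2) := by
    fun_prop
  have hzero : (0 : ℝ) ∈ Set.Icc (0 - 2 * sin (x + 0 / 2)) (2 - 2 * sin (x + 2 / 2)) := by
    constructor
    · simp only [zero_div, add_zero]; linarith
    · linarith [sin_le_one (x + 2 / 2)]
  obtain ⟨z, hz, hfz⟩ := intermediate_value_Icc zero_le_two hcont hzero
  exact ⟨z, hz, by linarith [hfz]⟩

theorem exists_unique_chord_p (x : ℝ) (hx : x ∈ Set.Icc 0 π) :
    (∃! z : ℝ, 0 ≤ z ∧ z = 2 * Real.sin (x + z / 2)) ∧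
      (∀ z : ℝ, 0 ≤ z → z = 2 * Real.sin (x + z / 2) → z ∈ Set.Icc (0:ℝ) 2) := by
  obtain ⟨z, ⟨hz₀, -⟩, hz⟩ :=
    exists_mem_Icc_eq_two_mul_sin_add_half (sin_nonneg_of_nonneg_of_le_pi hx.1 hx.2)
  refine ⟨⟨z, ⟨hz₀, hz⟩, fun w hw => eq_of_eq_two_mul_sin_add_half hw.2 hz⟩, ?_⟩
  intro w hw₀ hw
  exact ⟨hw₀, by linarith [sin_le_one (x + w / 2)]⟩
end

section
/- Define F(x) = x + f(x) on [0, π], where f(x) is the unique z ∈ [0, 2] with z = 2·sin(x − z/2). Then there exists x₀ ∈ (0, π) such that F is strictly increasing on [0, x₀] and strictly decreasing on [x₀, π]. -/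
/-!
Substitute `t = x - f x / 2`. The defining equation `f x = 2 sin t` turns into `x = t + sin t` and
`x + f x = t + 3 sin t`. Since `t ↦ t + sin t` is a strictly increasing bijection of `[0, π]`, the
substitution is an increasing change of variables, and `t ↦ t + 3 sin t` increases exactly while
`1 + 3 cos t > 0`, i.e. up to `t₀ = arccos (-1/3)`; the turning point of `F` is `t₀ + sin t₀`.
-/

open Real Set

namespace Real

lemma hasDerivAt_add_mul_sin (c t : ℝ) :
    HasDerivAt (fun t => t + c * sin t) (1 + c * cos t) t :=
  (hasDerivAt_id t).add ((hasDerivAt_sin t).const_mul c)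

variable {c : ℝ}

lemma neg_inv_lt_cos_of_lt_arccos (hc : 1 ≤ c) {t : ℝ} (ht₀ : 0 ≤ t)
    (ht : t < arccos (-c⁻¹)) : -c⁻¹ < cos t := by
  have hcinv : c⁻¹ ≤ 1 := inv_le_one_of_one_le₀ hc
  have hcos := strictAntiOn_cos ⟨ht₀, ht.le.trans (arccos_le_pi _)⟩
    ⟨arccos_nonneg _, arccos_le_pi _⟩ ht
  rwa [cos_arccos (by linarith) (by linarith [inv_pos.2 (zero_lt_one.trans_le hc)])] at hcos

lemma cos_lt_neg_inv_of_arccos_lt (hc : 1 ≤ c) {t : ℝ} (ht : arccos (-c⁻¹) < t)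
    (htπ : t ≤ π) : cos t < -c⁻¹ := by
  have hcinv : c⁻¹ ≤ 1 := inv_le_one_of_one_le₀ hc
  have hcos := strictAntiOn_cos ⟨arccos_nonneg _, arccos_le_pi _⟩
    ⟨(arccos_nonneg _).trans ht.le, htπ⟩ ht
  rwa [cos_arccos (by linarith) (by linarith [inv_pos.2 (zero_lt_one.trans_le hc)])] at hcos

lemma strictMonoOn_add_mul_sin (hc : 1 ≤ c) :
    StrictMonoOn (fun t => t + c * sin t) (Icc 0 (arccos (-c⁻¹))) := by
  refine strictMonoOn_of_hasDerivWithinAt_pos (convex_Icc _ _) (by fun_prop)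
    (fun t _ => (hasDerivAt_add_mul_sin c t).hasDerivWithinAt) fun t ht => ?_
  rw [interior_Icc] at ht
  have hcos := neg_inv_lt_cos_of_lt_arccos hc ht.1.le ht.2
  have hc₀ : 0 < c := zero_lt_one.trans_le hc
  have : -1 < c * cos t := by
    rwa [← mul_lt_mul_iff_of_pos_left hc₀, mul_neg, mul_inv_cancel₀ hc₀.ne'] at hcos
  linarith

lemma strictAntiOn_add_mul_sin (hc : 1 ≤ c) :
    StrictAntiOn (fun t => t + c * sin t) (Icc (arccos (-c⁻¹)) π) := by
  refine strictAntiOn_of_hasDerivWithinAt_neg (convex_Icc _ _) (by fun_prop)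
    (fun t _ => (hasDerivAt_add_mul_sin c t).hasDerivWithinAt) fun t ht => ?_
  rw [interior_Icc] at ht
  have hcos := cos_lt_neg_inv_of_arccos_lt hc ht.1 ht.2.le
  have hc₀ : 0 < c := zero_lt_one.trans_le hc
  have : c * cos t < -1 := by
    rwa [← mul_lt_mul_iff_of_pos_left hc₀, mul_neg, mul_inv_cancel₀ hc₀.ne'] at hcos
  linarith

lemma strictMonoOn_add_sin : StrictMonoOn (fun t => t + sin t) (Icc 0 π) := by
  simpa [arccos_neg_one] using strictMonoOn_add_mul_sin (le_refl (1 : ℝ))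

end Real

lemma StrictMonoOn.of_rightInvOn_of_mapsTo {h g : ℝ → ℝ} {s t : Set ℝ} (hh : StrictMonoOn h s)
    (hinv : RightInvOn g h t) (hg : MapsTo g t s) : StrictMonoOn g t := fun x hx y hy hxy =>
  (hh.lt_iff_lt (hg hx) (hg hy)).1 (by rwa [hinv.eq hx, hinv.eq hy])
lemma StrictMonoOn.unimodal_comp_of_rightInvOn {h φ g : ℝ → ℝ} {a b c d t₀ : ℝ}
    (hh : StrictMonoOn h (Icc a b)) (hφ_mono : StrictMonoOn φ (Icc a t₀))
    (hφ_anti : StrictAntiOn φ (Icc t₀ b)) (ht₀ : t₀ ∈ Icc a b)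
    (hinv : RightInvOn g h (Icc c d)) (hg : MapsTo g (Icc c d) (Icc a b)) (hx₀ : h t₀ ∈ Icc c d) :
    StrictMonoOn (φ ∘ g) (Icc c (h t₀)) ∧ StrictAntiOn (φ ∘ g) (Icc (h t₀) d) := by
  have hg_mono := hh.of_rightInvOn_of_mapsTo hinv hg
  have hle : ∀ x ∈ Icc c d, g x ≤ t₀ ↔ x ≤ h t₀ := fun x hx => by
    rw [← hh.le_iff_le (hg hx) ht₀, hinv.eq hx]
  have hge : ∀ x ∈ Icc c d, t₀ ≤ g x ↔ h t₀ ≤ x := fun x hx => by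
    rw [← hh.le_iff_le ht₀ (hg hx), hinv.eq hx]
  have hleft : Icc c (h t₀) ⊆ Icc c d := Icc_subset_Icc_right hx₀.2
  have hright : Icc (h t₀) d ⊆ Icc c d := Icc_subset_Icc_left hx₀.1
  refine ⟨hφ_mono.comp (hg_mono.mono hleft) fun x hx => ⟨(hg (hleft hx)).1, ?_⟩,
    hφ_anti.comp_strictMonoOn (hg_mono.mono hright) fun x hx => ⟨?_, (hg (hright hx)).2⟩⟩
  · exact (hle x (hleft hx)).2 hx.2
  · exact (hge x (hright hx)).2 hx.1

lemma sub_half_mem_Icc_of_eq_two_mul_sin {x z : ℝ} (hx : x ∈ Icc 0 π) (hz : 0 ≤ z)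
    (h : z = 2 * sin (x - z / 2)) : x - z / 2 ∈ Icc 0 π := by
  refine ⟨?_, by linarith [hx.2]⟩
  by_contra hneg
  have hz₂ : z ≤ 2 := by linarith [sin_le_one (x - z / 2)]
  have hsin := sin_neg_of_neg_of_neg_pi_lt (not_le.1 hneg) (by linarith [hx.1, pi_gt_three])
  linarith

theorem F_unimodal_general (f : ℝ → ℝ)
    (hf : ∀ x ∈ Set.Icc (0:ℝ) π, f x ∈ Set.Icc (0:ℝ) 2 ∧ f x = 2 * Real.sin (x - f x / 2)) :
    ∃ x₀ ∈ Set.Ioo (0:ℝ) π,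
      StrictMonoOn (fun x => x + f x) (Set.Icc 0 x₀) ∧
      StrictAntiOn (fun x => x + f x) (Set.Icc x₀ π) := by
  set g : ℝ → ℝ := fun x => x - f x / 2
  have hg : MapsTo g (Icc 0 π) (Icc 0 π) := fun x hx =>
    sub_half_mem_Icc_of_eq_two_mul_sin hx (hf x hx).1.1 (hf x hx).2
  have hinv : RightInvOn g (fun t => t + sin t) (Icc 0 π) := fun x hx => by
    simp only [g]
    linarith [(hf x hx).2]
  have hF : EqOn ((fun t => t + 3 * sin t) ∘ g) (fun x => x + f x) (Icc 0 π) := fun x hx => by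
    simp only [g, Function.comp]
    linarith [(hf x hx).2]
  set t₀ := arccos (-3⁻¹)
  have ht₀ : t₀ ∈ Ioo 0 π := ⟨arccos_pos.2 (by norm_num), arccos_lt_pi.2 (by norm_num)⟩
  have hx₀ : t₀ + sin t₀ ∈ Ioo 0 π := by
    have h0 := strictMonoOn_add_sin ⟨le_rfl, pi_pos.le⟩ (Ioo_subset_Icc_self ht₀) ht₀.1
    have hπ := strictMonoOn_add_sin (Ioo_subset_Icc_self ht₀) ⟨pi_pos.le, le_rfl⟩ ht₀.2
    simp only [sin_zero, sin_pi, add_zero] at h0 hπ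
    exact ⟨h0, hπ⟩
  obtain ⟨hmono, hanti⟩ := strictMonoOn_add_sin.unimodal_comp_of_rightInvOn
    (strictMonoOn_add_mul_sin (by norm_num)) (strictAntiOn_add_mul_sin (by norm_num))
    (Ioo_subset_Icc_self ht₀) hinv hg (Ioo_subset_Icc_self hx₀)
  exact ⟨_, hx₀, hmono.congr (hF.mono (Icc_subset_Icc_right hx₀.2.le)),
    hanti.congr (hF.mono (Icc_subset_Icc_left hx₀.1.le))⟩

theorem F_unimodal (f : ℝ → ℝ)
    (hf : ∀ x ∈ Set.Icc (0:ℝ) π, f x ∈ Set.Icc (0:ℝ) 2 ∧ f x = 2 * Real.sin (x - f x / 2))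
    (huniq : ∀ x ∈ Set.Icc (0:ℝ) π, ∀ z ∈ Set.Icc (0:ℝ) 2,
      z = 2 * Real.sin (x - z / 2) → z = f x) :
    ∃ x₀ ∈ Set.Ioo (0:ℝ) π,
      StrictMonoOn (fun x => x + f x) (Set.Icc 0 x₀) ∧
      StrictAntiOn (fun x => x + f x) (Set.Icc x₀ π) :=
  F_unimodal_general f hf
end

section
/- Let x₀ ∈ [0, π] and f(x₀) ∈ [0, 2] satisfy f(x₀) = 2·sin(x₀ − f(x₀)/2), with x₀ ≈ 2.85344. Then for all x ∈ [0, π], x + f(x) ≤ 1 + x₀ + f(x₀) < 5.740, where f(x) is the unique z ∈ [0, 2] with z = 2·sin(x − z/2). -/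
open Real

/-!
With `θ = x₀ - f x₀ / 2` the defining equation reads `f x₀ = 2 sin θ`, so `x₀ = θ + sin θ`
and `x₀ + f x₀ = θ + 3 sin θ`. On `[0, π]` the concave function `θ + 3 sin θ` lies below its
tangent at the critical point `arccos (-1/3)`, where it equals `arccos (-1/3) + 2√2 ≈ 4.73906`.
On the other hand `x₀ ≈ 2.853` forces `x₀ + f x₀ ≥ π + 1`, while `x + f x ≤ π + 2` for every
`x ∈ [0, π]`.
-/

open Finset in
theorem Real.sum_range_two_mul_le_cos {x : ℝ} (hx : x ^ 2 ≤ 2) (k : ℕ) :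
    ∑ i ∈ range (2 * k), (-1) ^ i * (x ^ (2 * i) / (2 * i).factorial) ≤ cos x := by
  have hsum : HasSum (fun i ↦ (-1) ^ i * (x ^ (2 * i) / (2 * i).factorial)) (cos x) := by
    simpa only [mul_div_assoc] using Real.hasSum_cos x
  refine Antitone.alternating_series_le_tendsto hsum.tendsto_sum_nat
    (antitone_nat_of_succ_le fun n ↦ ?_) k
  have hfact : ((2 * (n + 1)).factorial : ℝ) = (2 * n + 1) * (2 * n + 2) * (2 * n).factorial := by
    rw [show 2 * (n + 1) = 2 * n + 1 + 1 by ring, Nat.factorial_succ, Nat.factorial_succ]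
    push_cast
    ring
  rw [hfact, pow_mul, pow_mul, pow_succ, div_le_div_iff₀ (by positivity) (by positivity)]
  have hratio : x ^ 2 ≤ (2 * n + 1) * (2 * n + 2) := by
    nlinarith [(n.cast_nonneg : (0 : ℝ) ≤ n)]
  have hpos : 0 ≤ (x ^ 2) ^ n * ((2 * n).factorial : ℝ) := by positivity
  linear_combination mul_le_mul_of_nonneg_left hratio hpos

theorem inv_three_lt_cos : (3 : ℝ)⁻¹ < cos 1.2302 := by
  have h := Real.sum_range_two_mul_le_cos (x := 1.2302) (by norm_num) 2
  norm_num [Finset.sum_range_succ, Nat.factorial] at h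
  linarith

theorem ConcaveOn.le_add_mul_sub_of_hasDerivAt {S : Set ℝ} {f : ℝ → ℝ} {a x f' : ℝ}
    (hfc : ConcaveOn ℝ S f) (ha : a ∈ S) (hx : x ∈ S) (hf' : HasDerivAt f f' a) :
    f x ≤ f a + f' * (x - a) := by
  rcases lt_trichotomy x a with hxa | rfl | hax
  · have h := hfc.le_slope_of_hasDerivAt hx ha hxa hf'
    rw [slope_def_field, le_div_iff₀ (sub_pos.2 hxa)] at h
    linarith
  · simp
  · have h := hfc.slope_le_of_hasDerivAt ha hx hax hf'
    rw [slope_def_field, div_le_iff₀ (sub_pos.2 hax)] at h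
    linarith

theorem add_mul_sin_le_arccos_neg_inv {k θ : ℝ} (hk : 1 ≤ k) (hθ : θ ∈ Set.Icc 0 π) :
    θ + k * sin θ ≤ arccos (-k⁻¹) + k * sin (arccos (-k⁻¹)) := by
  set a := arccos (-k⁻¹)
  have hk0 : 0 < k := by linarith
  have hkcos : k * cos a = -1 := by
    rw [cos_arccos (by linarith [inv_le_one_of_one_le₀ hk]) (by linarith [inv_pos.2 hk0]),
      mul_neg, mul_inv_cancel₀ hk0.ne']
  have htangent := strictConcaveOn_sin_Icc.concaveOn.le_add_mul_sub_of_hasDerivAt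
    ⟨arccos_nonneg _, arccos_le_pi _⟩ hθ (hasDerivAt_sin a)
  calc θ + k * sin θ ≤ θ + k * (sin a + cos a * (θ - a)) := by gcongr
    _ = a + k * sin a := by linear_combination (θ - a) * hkcos

theorem arccos_neg_inv_three_add_lt :
    arccos (-3⁻¹) + 3 * sin (arccos (-3⁻¹)) < 4.74 := by
  have harccos : 1.2302 < arccos 3⁻¹ := by
    calc (1.2302 : ℝ) = arccos (cos 1.2302) :=
          (arccos_cos (by norm_num) (by linarith [pi_gt_three])).symm
      _ < arccos 3⁻¹ := arccos_lt_arccos (by norm_num) inv_three_lt_cos (cos_le_one _)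
  have hsin : sin (arccos (-3⁻¹)) < 0.94281 := by
    rw [sin_arccos, sqrt_lt' (by norm_num)]
    norm_num
  linarith [arccos_neg 3⁻¹, pi_lt_d4]

theorem pi_add_one_le_add_three_mul_sin {θ : ℝ} (hθ : θ ≤ π) (h₁ : 2.8 ≤ θ + sin θ)
    (h₂ : θ + sin θ ≤ 2.9) : π + 1 ≤ θ + 3 * sin θ := by
  set u := π - θ with hu
  have hu0 : 0 ≤ u := by linarith
  have hsin : sin θ = sin u := by rw [hu, sin_pi_sub]
  rw [hsin] at h₁ h₂ ⊢
  -- `u` is pinned to `[1.13, 1.35]`, where `3 sin u ≥ 3u - u³/2 ≥ 1 + u`.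
  have hcube := sin_ge_sub_cube hu0
  have hle : u ≤ 1.35 := by linarith [sin_le_one u, pi_lt_d4]
  have hge : 1.13 ≤ u := by
    by_contra! h
    have := pow_le_pow_left₀ hu0 h.le 3
    linarith [pi_gt_d4]
  have hcube_le : u ^ 3 ≤ 1.8225 * u := by
    nlinarith [mul_le_mul_of_nonneg_left (pow_le_pow_left₀ hu0 hle 2) hu0]
  linarith

theorem algoA_upper_bound_general (f : ℝ → ℝ)
    (hf : ∀ x ∈ Set.Icc (0:ℝ) π, f x ∈ Set.Icc (0:ℝ) 2 ∧ f x = 2 * Real.sin (x - f x / 2))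
    (x₀ : ℝ)
    (hx₀approx : |x₀ - 2.85344| ≤ 0.001)
    (hfx₀ : f x₀ ∈ Set.Icc (0:ℝ) 2)
    (heq : f x₀ = 2 * Real.sin (x₀ - f x₀ / 2)) :
    (∀ x ∈ Set.Icc (0:ℝ) π, x + f x ≤ 1 + x₀ + f x₀) ∧ 1 + x₀ + f x₀ < 5.740 := by
  obtain ⟨hx₀lo, hx₀hi⟩ := abs_le.1 hx₀approx
  set θ := x₀ - f x₀ / 2 with hθ
  have hθπ : θ ≤ π := by linarith [hfx₀.1, pi_gt_three]
  have hlower := pi_add_one_le_add_three_mul_sin hθπ (by linarith) (by linarith)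
  have hupper :=
    add_mul_sin_le_arccos_neg_inv (k := 3) (by norm_num) ⟨by linarith [hfx₀.2], hθπ⟩
  refine ⟨fun x hx ↦ ?_, ?_⟩
  · linarith [hx.2, (hf x hx).1.2]
  · linarith [arccos_neg_inv_three_add_lt]

theorem algoA_upper_bound (f : ℝ → ℝ)
    (hf : ∀ x ∈ Set.Icc (0:ℝ) π, f x ∈ Set.Icc (0:ℝ) 2 ∧ f x = 2 * Real.sin (x - f x / 2))
    (x₀ : ℝ) (hx₀ : x₀ ∈ Set.Icc (0:ℝ) π)
    (hx₀approx : |x₀ - 2.85344| ≤ 0.001)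
    (hfx₀ : f x₀ ∈ Set.Icc (0:ℝ) 2)
    (heq : f x₀ = 2 * Real.sin (x₀ - f x₀ / 2)) :
    (∀ x ∈ Set.Icc (0:ℝ) π, x + f x ≤ 1 + x₀ + f x₀) ∧ 1 + x₀ + f x₀ < 5.740 :=
  algoA_upper_bound_general f hf x₀ hx₀approx hfx₀ heq
end

section
/- Consider two agents with unit maximum speed evacuating a regular hexagon of circumradius 1 with an exit at an unknown vertex, starting from arbitrary vertices. Any deterministic algorithm has worst-case evacuation time at least 2 + √3. -/
open Real

/-- The vertices of a regular hexagon of circumradius 1. -/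
noncomputable def hexVertex (k : ZMod 6) : ℂ :=
  Complex.exp (((k.val : ℝ) * (π / 3)) * Complex.I)

/-- A deterministic evacuation algorithm for two unit-speed agents on a regular
hexagon of circumradius 1, in the face-to-face communication model.
`base` is the pair of trajectories followed as long as no exit information is
available; `traj e` are the trajectories when the exit is at vertex `e`;
`informedAt e i` is the time agent `i` becomes informed about the exit `e`:
until then its trajectory agrees with the base trajectory, and at that moment
it is either located at the exit or co-located with an agent informed earlier. -/
structure HexEvacAlgo where
  start : Fin 2 → ZMod 6
  base : Fin 2 → ℝ → ℂ
  traj : ZMod 6 → Fin 2 → ℝ → ℂ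
  informedAt : ZMod 6 → Fin 2 → ℝ
  lip_base : ∀ i, LipschitzWith 1 (base i)
  lip_traj : ∀ e i, LipschitzWith 1 (traj e i)
  base_start : ∀ i, base i 0 = hexVertex (start i)
  informed_nonneg : ∀ e i, 0 ≤ informedAt e i
  agree_before : ∀ e i t, t ≤ informedAt e i → traj e i t = base i t
  informed_reason : ∀ e i,
    traj e i (informedAt e i) = hexVertex e ∨
    ∃ j : Fin 2, j ≠ i ∧ informedAt e j < informedAt e i ∧
      traj e j (informedAt e i) = traj e i (informedAt e i)

/-!
Let `S e` be the time at which the first agent to learn of the exit `e` finds it, on the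
trajectories the agents follow while no exit is known. If every exit were evacuated before
`L = 2 + √3`, then, since news of `e` travels at unit speed, any two vertices satisfy
`d(e, e') < L - S e'` or `d(e, e') ≤ S e' - S e`. An agent visits distinct vertices at least
one time unit apart, so at most four vertices have `S < 2`; two of the remaining vertices then
yield a vertex `m` with `2 ≤ S m < 1 + √3`. The three vertices at distance at least `√3` from
`m` must all have `S < 1`, which two agents cannot achieve.
-/

theorem hexVertex_eq_stdAddChar (k : ZMod 6) : hexVertex k = ZMod.stdAddChar k := by
  rw [hexVertex, ZMod.stdAddChar_apply, ZMod.toCircle_apply]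
  congr 1
  push_cast
  ring

theorem dist_hexVertex_add_self (m k : ZMod 6) :
    dist (hexVertex (m + k)) (hexVertex m) = 2 * |sin (k.val * π / 6)| := by
  have hk : hexVertex k = Complex.exp (Complex.I * ↑(k.val * π / 3)) := by
    rw [hexVertex]; push_cast; ring_nf
  rw [hexVertex_eq_stdAddChar, AddChar.map_add_eq_mul, ← hexVertex_eq_stdAddChar,
    ← hexVertex_eq_stdAddChar, dist_eq_norm, ← mul_sub_one, norm_mul, hk,
    Complex.norm_exp_I_mul_ofReal_sub_one, hexVertex_eq_stdAddChar, ZMod.stdAddChar_apply,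
    Circle.norm_coe, one_mul, norm_mul, Real.norm_eq_abs, Real.norm_eq_abs, abs_two]
  ring_nf

theorem one_le_dist_hexVertex {a b : ZMod 6} (hab : a ≠ b) :
    1 ≤ dist (hexVertex a) (hexVertex b) := by
  have h3 : 1 < √3 := by simp [Real.lt_sqrt]
  have hk : a - b ≠ 0 := sub_ne_zero.2 hab
  rw [← add_sub_cancel b a, dist_hexVertex_add_self]
  generalize a - b = k at hk ⊢
  fin_cases k
  · exact absurd rfl hk
  all_goals
    norm_num [ZMod.val, show 4 * π / 6 = π - π / 3 by ring,
      show 5 * π / 6 = π - π / 6 by ring, show 2 * π / 6 = π / 3 by ring,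
      show 3 * π / 6 = π / 2 by ring, abs_of_pos, h3.le] <;>
    linarith

theorem sqrt_three_le_dist_hexVertex_add_self (m : ZMod 6) {k : ZMod 6}
    (hk : k = 2 ∨ k = 3 ∨ k = 4) : √3 ≤ dist (hexVertex (m + k)) (hexVertex m) := by
  have h3 : √3 < 2 := by rw [Real.sqrt_lt' two_pos]; norm_num
  rw [dist_hexVertex_add_self]
  rcases hk with rfl | rfl | rfl
  all_goals
    norm_num [show (2 : ZMod 6).val = 2 from rfl, show (3 : ZMod 6).val = 3 from rfl,
      show (4 : ZMod 6).val = 4 from rfl, show 4 * π / 6 = π - π / 3 by ring,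
      show 2 * π / 6 = π / 3 by ring, show 3 * π / 6 = π / 2 by ring, abs_of_pos, h3.le] <;>
    linarith

theorem LipschitzWith.dist_le_abs_sub {α : Type*} [PseudoMetricSpace α] {f : ℝ → α}
    (hf : LipschitzWith 1 f) (s t : ℝ) : dist (f s) (f t) ≤ |s - t| := by
  simpa [Real.dist_eq] using hf.dist_le_mul s t

namespace HexEvacAlgo

variable (algo : HexEvacAlgo)

/-- The first informed agent `i` is at `e` at time `s`. Until the other agent `j` learns of the
exit it is within `T - t` of `e` at time `t`, as it still reaches `e` by time `T`; afterwards it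
is within `t - s`, as the news has travelled at unit speed. -/
theorem exists_first_visit {e : ZMod 6} {T : ℝ} (hT0 : 0 ≤ T)
    (hT : ∀ i, algo.traj e i T = hexVertex e) :
    ∃ (i : Fin 2) (s : ℝ), 0 ≤ s ∧ s ≤ T ∧ algo.base i s = hexVertex e ∧
      ∀ j ≠ i, ∀ t, dist (algo.base j t) (hexVertex e) ≤ T - t ∨
        dist (algo.base j t) (hexVertex e) ≤ t - s := by
  set σ := algo.informedAt e
  obtain ⟨i, hi⟩ := Finite.exists_min σ
  have hbase : ∀ k t, t ≤ σ k → algo.base k t = algo.traj e k t :=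
    fun k t ht => (algo.agree_before e k t ht).symm
  have hfound : algo.traj e i (σ i) = hexVertex e := by
    rcases algo.informed_reason e i with h | ⟨j, -, hj, -⟩
    · exact h
    · exact absurd (hi j) hj.not_ge
  refine ⟨i, min T (σ i), le_min hT0 (algo.informed_nonneg e i), min_le_left _ _, ?_, ?_⟩
  · rcases le_total T (σ i) with h | h
    · rw [min_eq_left h, hbase i T h, hT]
    · rw [min_eq_right h, hbase i _ le_rfl, hfound]
  intro j hji t
  rcases le_total t (σ j) with ht | ht
  · have := (algo.lip_traj e j).dist_le_abs_sub t T
    rw [← hbase j t ht, hT] at this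
    rcases le_total t T with htT | htT
    · exact Or.inl (this.trans_eq (by rw [abs_sub_comm, abs_of_nonneg (by linarith)]))
    · refine Or.inr (this.trans ?_)
      rw [abs_of_nonneg (by linarith)]
      linarith [min_le_left T (σ i)]
  · have hnews : dist (algo.base j (σ j)) (hexVertex e) ≤ σ j - σ i := by
      rw [hbase j _ le_rfl]
      rcases algo.informed_reason e j with h | ⟨k, hkj, -, hmeet⟩
      · rw [h, dist_self]; linarith [hi j]
      · obtain rfl : k = i := by omega
        rw [← hmeet, ← hfound]
        exact (algo.lip_traj e k).dist_le_abs_sub _ _ |>.trans_eq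
          (abs_of_nonneg (by linarith [hi j]))
    right
    calc dist (algo.base j t) (hexVertex e)
        ≤ dist (algo.base j t) (algo.base j (σ j)) + dist (algo.base j (σ j)) (hexVertex e) :=
          dist_triangle _ _ _
      _ ≤ (t - σ j) + (σ j - σ i) := by
          gcongr
          exact (algo.lip_base j).dist_le_abs_sub _ _ |>.trans_eq (abs_of_nonneg (by linarith))
      _ ≤ t - min T (σ i) := by linarith [min_le_right T (σ i)]

end HexEvacAlgo

theorem Finset.card_le_of_separated {α β : Type*} [Fintype β] (owner : α → β)
    (S : α → ℝ) (s : Finset α) (k : ℕ) (hS : ∀ x ∈ s, 0 ≤ S x ∧ S x < k)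
    (hsep : ∀ x ∈ s, ∀ y ∈ s, x ≠ y → owner x = owner y → 1 ≤ |S x - S y|) :
    s.card ≤ Fintype.card β * k := by
  classical
  have hmaps :
      Set.MapsTo (fun x => (owner x, ⌊S x⌋₊)) s (univ ×ˢ range k : Finset (β × ℕ)) :=
    fun x hx => by simpa using (Nat.floor_lt (hS x hx).1).2 (hS x hx).2
  have hinj : Set.InjOn (fun x => (owner x, ⌊S x⌋₊)) s := by
    intro x hx y hy hxy
    simp only [Prod.mk.injEq] at hxy
    by_contra hne
    have := hsep x hx y hy hne hxy.1
    have hx1 := Nat.floor_le (hS x hx).1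
    have hy1 := Nat.floor_le (hS y hy).1
    have hx2 := Nat.lt_floor_add_one (S x)
    have hy2 := Nat.lt_floor_add_one (S y)
    rw [hxy.2] at hx1 hx2
    exact (abs_sub_lt_iff.2 ⟨by linarith, by linarith⟩).not_ge this
  simpa using card_le_card_of_injOn _ hmaps hinj

open Finset

section Schedule

variable {I : ZMod 6 → Fin 2} {S : ZMod 6 → ℝ}

theorem exists_two_le_lt_one_add_sqrt_three (hS0 : ∀ e, 0 ≤ S e)
    (hsep : ∀ e e', I e = I e' → dist (hexVertex e) (hexVertex e') ≤ |S e - S e'|)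
    (hcross : ∀ e e', dist (hexVertex e) (hexVertex e') < 2 + √3 - S e' ∨
      dist (hexVertex e) (hexVertex e') ≤ S e' - S e) :
    ∃ m, 2 ≤ S m ∧ S m < 1 + √3 := by
  classical
  have hearly : (univ.filter fun e => S e < 2).card ≤ 4 := by
    refine (card_le_of_separated I S _ 2 (fun e he => ⟨hS0 e, by simpa using he⟩)
      fun e _ e' _ hne h => (one_le_dist_hexVertex hne).trans (hsep e e' h)).trans ?_
    simp
  have hlate : 1 < (univ.filter fun e => ¬ S e < 2).card := by
    have := card_filter_add_card_filter_not (s := univ) fun e => S e < 2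
    simp only [card_univ, ZMod.card] at this
    omega
  obtain ⟨l, hl, l', hl', hne⟩ := one_lt_card.1 hlate
  simp only [mem_filter, mem_univ, true_and, not_lt] at hl hl'
  have h1 := one_le_dist_hexVertex hne
  rcases hcross l l' with h | h
  · exact ⟨l', hl', by linarith⟩
  rcases hcross l' l with h' | h'
  · exact ⟨l, hl, by rw [dist_comm] at h'; linarith⟩
  · rw [dist_comm] at h'; linarith

theorem false_of_hexagon_schedule (hS0 : ∀ e, 0 ≤ S e)
    (hsep : ∀ e e', I e = I e' → dist (hexVertex e) (hexVertex e') ≤ |S e - S e'|)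
    (hcross : ∀ e e', dist (hexVertex e) (hexVertex e') < 2 + √3 - S e' ∨
      dist (hexVertex e) (hexVertex e') ≤ S e' - S e) : False := by
  classical
  obtain ⟨m, hm, hm'⟩ := exists_two_le_lt_one_add_sqrt_three hS0 hsep hcross
  have hfar :
      ∀ g ∈ ({2, 3, 4} : Finset (ZMod 6)).image (m + ·), 0 ≤ S g ∧ S g < (1 : ℕ) := by
    simp only [mem_image, mem_insert, mem_singleton]
    rintro _ ⟨k, hk, rfl⟩
    have := sqrt_three_le_dist_hexVertex_add_self m hk
    refine ⟨hS0 _, ?_⟩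
    rcases hcross (m + k) m with h | h <;> push_cast <;> linarith
  have := card_le_of_separated I S _ 1 hfar
    fun e _ e' _ hne h => (one_le_dist_hexVertex hne).trans (hsep e e' h)
  rw [card_image_of_injective _ (add_right_injective m)] at this
  simp only [Fintype.card_fin, mul_one] at this
  exact absurd this (by decide)

end Schedule

/-- Any deterministic face-to-face evacuation algorithm on the hexagon
has worst-case evacuation time at least `2 + √3`. -/
theorem hex_evacuation_lower_bound (algo : HexEvacAlgo) :
    ∃ e : ZMod 6, ∀ T : ℝ, 0 ≤ T →
      (∀ i : Fin 2, algo.traj e i T = hexVertex e) → 2 + Real.sqrt 3 ≤ T := by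
  by_contra! hfast
  choose T hT0 hT hTlt using hfast
  choose I S hS0 hST hvisit hother using fun e => algo.exists_first_visit (hT0 e) (hT e)
  have hsep : ∀ e e', I e = I e' → dist (hexVertex e) (hexVertex e') ≤ |S e - S e'| := by
    intro e e' h
    rw [← hvisit e, ← hvisit e', h]
    exact (algo.lip_base _).dist_le_abs_sub _ _
  refine false_of_hexagon_schedule hS0 hsep fun e e' => ?_
  have hSe : S e < 2 + √3 := (hST e).trans_lt (hTlt e)
  by_cases h : I e' = I e
  · have := hsep e e' h.symm
    rcases abs_cases (S e - S e') with ⟨ha, -⟩ | ⟨ha, -⟩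
    · left; linarith
    · right; linarith
  · have := hother e (I e') h (S e')
    rw [hvisit e', dist_comm] at this
    exact this.imp_left fun h' => h'.trans_lt (by linarith [hTlt e])
end
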